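/- arXiv:2006.08244 — 5 statements merged into one kernel-verified Lean document; each statement's English description precedes it below -/
import Mathlib

section
/- Let φ: [0,∞) → [0,∞) satisfy (aInc)_p with constant L ≥ 1 for some p > 1, i.e. φ(s)/s^p ≤ L·φ(t)/t^p whenever 0 < s ≤ t. Then its conjugate φ*(t) = sup_{s≥0}(t·s − φ(s)) satisfies (aDec)_{p/(p−1)} with a constant depending only on L and p, i.e. t ↦ φ*(t)/t^{p/(p−1)} is almost decreasing. -/
/-!
If `φ(s)/s^p` is almost increasing with constant `L`, then `φ(c u) ≤ L c^p φ(u)` for `0 < c ≤ 1`.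
Substituting `u ↦ c u` in the supremum defining `φ*` turns this into
`φ*(C c s) ≤ C φ*(s)` with `C = c^(-p)/L`. Choosing `c` so that `C c s = a s` gives
`φ*(a s) ≤ L^(1/(p-1)) a^(p/(p-1)) φ*(s)` for `a ≥ 1`, which is the almost decrease of
`φ*(t)/t^(p/(p-1))`.
-/

/-- The conjugate Φ-function φ*(t) = sup_{s ≥ 0} (t·s − φ(s)), valued in [0,∞]. -/
noncomputable def conjPhi (φ : ℝ → ℝ) (t : ℝ) : ENNReal :=
  ⨆ s : Set.Ici (0 : ℝ), ENNReal.ofReal (t * s - φ s)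

open ENNReal

theorem conjPhi_mul_le_of_scaling {φ : ℝ → ℝ} {C c : ℝ} (s : ℝ) (hφ0 : 0 ≤ φ 0)
    (hC : 0 ≤ C) (hc : 0 ≤ c) (hscale : ∀ u, 0 < u → C * φ (c * u) ≤ φ u) :
    conjPhi φ (C * c * s) ≤ ENNReal.ofReal C * conjPhi φ s := by
  refine iSup_le fun ⟨u, hu⟩ => ?_
  rcases (Set.mem_Ici.mp hu).eq_or_lt with rfl | hu0
  · simp [ENNReal.ofReal_of_nonpos (neg_nonpos.2 hφ0)]
  calc ENNReal.ofReal (C * c * s * u - φ u)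
      ≤ ENNReal.ofReal (C * (s * (c * u) - φ (c * u))) :=
        ENNReal.ofReal_le_ofReal (by linear_combination hscale u hu0)
    _ = ENNReal.ofReal C * ENNReal.ofReal (s * (c * u) - φ (c * u)) := ENNReal.ofReal_mul hC
    _ ≤ ENNReal.ofReal C * conjPhi φ s := by
        gcongr
        exact le_iSup (fun v : Set.Ici (0 : ℝ) => ENNReal.ofReal (s * v - φ v))
          ⟨c * u, mul_nonneg hc hu0.le⟩

theorem le_mul_rpow_mul_of_almostIncreasing {φ : ℝ → ℝ} {p L : ℝ}
    (hInc : ∀ s t : ℝ, 0 < s → s ≤ t → φ s / s ^ p ≤ L * (φ t / t ^ p))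
    {c u : ℝ} (hc : 0 < c) (hc1 : c ≤ 1) (hu : 0 < u) :
    φ (c * u) ≤ L * c ^ p * φ u := by
  have h := hInc (c * u) u (by positivity) (mul_le_of_le_one_left hu.le hc1)
  rw [Real.mul_rpow hc.le hu.le, div_le_iff₀ (by positivity)] at h
  have hup : u ^ p ≠ 0 := (Real.rpow_pos_of_pos hu p).ne'
  calc φ (c * u) ≤ L * (φ u / u ^ p) * (c ^ p * u ^ p) := h
    _ = L * c ^ p * φ u := by field_simp

theorem conjPhi_mul_le_of_almostIncreasing {φ : ℝ → ℝ} {p L : ℝ} (hp : 1 < p) (hL : 1 ≤ L)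
    (hφ0 : 0 ≤ φ 0) (hInc : ∀ s t : ℝ, 0 < s → s ≤ t → φ s / s ^ p ≤ L * (φ t / t ^ p))
    {a : ℝ} (ha : 1 ≤ a) (s : ℝ) :
    conjPhi φ (a * s) ≤
      ENNReal.ofReal (L ^ (1 / (p - 1)) * a ^ (p / (p - 1))) * conjPhi φ s := by
  have hp1 : p - 1 ≠ 0 := by linarith
  have hp1' : 1 - p ≠ 0 := by linarith
  have hL0 : 0 < L := by linarith
  have hb : 1 ≤ L * a := one_le_mul_of_one_le_of_one_le hL ha
  have hb0 : 0 ≤ L * a := by linarith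
  -- chosen so that `c ^ (1 - p) = L * a`, i.e. `C * c = a`
  set c := (L * a) ^ (1 / (1 - p))
  set C := c ^ (-p) / L
  have hc : 0 < c := by positivity
  have hc1 : c ≤ 1 :=
    Real.rpow_le_one_of_one_le_of_nonpos hb
      (div_nonpos_of_nonneg_of_nonpos zero_le_one (by linarith))
  have hcp : c ^ (-p) = (L * a) ^ (p / (p - 1)) := by
    rw [← Real.rpow_mul hb0]
    congr 1
    field_simp
    ring
  have hCc : C * c = a := by
    have hc1p : c ^ (-p) * c = L * a := by
      rw [← Real.rpow_add_one hc.ne', ← Real.rpow_mul hb0]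
      convert Real.rpow_one (L * a) using 2
      field_simp
      ring
    simp only [C, div_mul_eq_mul_div, hc1p]
    field_simp
  have hCval : C = L ^ (1 / (p - 1)) * a ^ (p / (p - 1)) := by
    have hexp : 1 / (p - 1) = p / (p - 1) - 1 := by field_simp; ring
    rw [show C = c ^ (-p) / L from rfl, hexp, Real.rpow_sub_one hL0.ne', hcp,
      Real.mul_rpow hL0.le (by linarith)]
    ring
  have hscale : ∀ u, 0 < u → C * φ (c * u) ≤ φ u := fun u hu =>
    calc C * φ (c * u) ≤ C * (L * c ^ p * φ u) := by
          gcongr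
          exact le_mul_rpow_mul_of_almostIncreasing hInc hc hc1 hu
      _ = c ^ (-p) * c ^ p * φ u := by simp only [C]; field_simp
      _ = φ u := by rw [← Real.rpow_add hc]; simp
  have h := conjPhi_mul_le_of_scaling s hφ0 (by positivity) hc.le hscale
  rwa [hCc, hCval] at h

theorem ENNReal.div_ofReal_rpow_le_of_le_mul {A B : ℝ≥0∞} {K s t q : ℝ} (hK : 0 ≤ K)
    (hs : 0 < s) (ht : 0 ≤ t) (hq : 0 ≤ q) (h : A ≤ ENNReal.ofReal (K * (t / s) ^ q) * B) :
    A / ENNReal.ofReal t ^ q ≤ ENNReal.ofReal K * (B / ENNReal.ofReal s ^ q) := by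
  rw [ENNReal.ofReal_mul hK, ← ENNReal.ofReal_rpow_of_nonneg (div_nonneg ht hs.le) hq,
    ENNReal.ofReal_div_of_pos hs, ENNReal.div_rpow_of_nonneg _ _ hq] at h
  refine ENNReal.div_le_of_le_mul (h.trans_eq ?_)
  simp only [div_eq_mul_inv]
  ring

/-- if φ satisfies (aInc)_p with constant L for p > 1, then φ* satisfies
(aDec)_{p/(p−1)} with a constant depending only on L and p. -/
theorem stmt4 (p L : ℝ) (hp : 1 < p) (hL : 1 ≤ L) :
    ∃ L' : ℝ, 1 ≤ L' ∧
      ∀ φ : ℝ → ℝ,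
        (∀ t : ℝ, 0 ≤ t → 0 ≤ φ t) →
        (∀ s t : ℝ, 0 < s → s ≤ t → φ s / s ^ p ≤ L * (φ t / t ^ p)) →
        ∀ s t : ℝ, 0 < s → s ≤ t →
          conjPhi φ t / ENNReal.ofReal t ^ (p / (p - 1)) ≤
            ENNReal.ofReal L' * (conjPhi φ s / ENNReal.ofReal s ^ (p / (p - 1))) := by
  have hp1 : 0 < p - 1 := by linarith
  refine ⟨L ^ (1 / (p - 1)), Real.one_le_rpow hL (by positivity), ?_⟩
  intro φ hφ0 hInc s t hs hst
  have h := conjPhi_mul_le_of_almostIncreasing hp hL (hφ0 0 le_rfl) hInc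
    ((one_le_div hs).2 hst) s
  rw [div_mul_cancel₀ t hs.ne'] at h
  exact ENNReal.div_ofReal_rpow_le_of_le_mul (by positivity) hs (hs.le.trans hst)
    (by positivity) h
end

section
/- Let φ: [0,∞) → [0,∞) satisfy (aDec)_q with constant L ≥ 1 for some q > 1. Then φ*(t) = sup_{s≥0}(t·s − φ(s)) satisfies (aInc)_{q/(q−1)} with a constant depending only on L and q. -/
/-!
Put `p = q/(q-1)` and `w = L s / t`, so that `φ*(s) / s^p ≤ L^p φ*(t) / t^p` amounts to
`φ*(s) ≤ w^p φ*(t)`. If `w ≥ 1` this is monotonicity of `φ*`. If `w < 1`, every competitor `u` for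
`φ*(s)` is matched by the competitor `v = w^(1-p) u ≥ u` for `φ*(t)`: (aDec)_q gives
`φ(v) ≤ L w^(-p) φ(u)`, hence `w^p (t v - φ v) ≥ L (s u - φ u) ≥ s u - φ u` whenever the latter is
positive.
-/

open ENNReal

def AlmostDecPow (φ : ℝ → ℝ) (q L : ℝ) : Prop :=
  ∀ s t : ℝ, 0 < s → s ≤ t → φ t / t ^ q ≤ L * (φ s / s ^ q)

theorem AlmostDecPow.le_mul_rpow {φ : ℝ → ℝ} {q L : ℝ} (h : AlmostDecPow φ q L)
    {c u : ℝ} (hc : 1 ≤ c) (hu : 0 < u) : φ (c * u) ≤ L * c ^ q * φ u := by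
  have hc0 : 0 < c := one_pos.trans_le hc
  have hcu := h u (c * u) hu (le_mul_of_one_le_left hu.le hc)
  rw [Real.mul_rpow hc0.le hu.le, div_le_iff₀ (by positivity)] at hcu
  calc φ (c * u) ≤ L * (φ u / u ^ q) * (c ^ q * u ^ q) := hcu
    _ = L * c ^ q * φ u := by field_simp

theorem ofReal_sub_le_conjPhi (φ : ℝ → ℝ) (t : ℝ) {u : ℝ} (hu : 0 ≤ u) :
    ENNReal.ofReal (t * u - φ u) ≤ conjPhi φ t :=
  le_iSup (fun x : Set.Ici (0 : ℝ) => ENNReal.ofReal (t * x - φ x)) ⟨u, hu⟩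

theorem conjPhi_mono (φ : ℝ → ℝ) : Monotone (conjPhi φ) := fun s t hst =>
  iSup_le fun u => (ofReal_le_ofReal (by nlinarith [u.2.out])).trans
    (ofReal_sub_le_conjPhi φ t u.2)

section Scaling

variable {φ : ℝ → ℝ} {q L s t : ℝ}

theorem conjPhi_le_rpow_mul_of_mul_le (hφ : ∀ u, 0 ≤ u → 0 ≤ φ u) (hdec : AlmostDecPow φ q L)
    (hq : 1 < q) (hL : 1 ≤ L) (hs : 0 < s) (hLst : L * s ≤ t) :
    conjPhi φ s ≤ ENNReal.ofReal ((L * s / t) ^ (q / (q - 1))) * conjPhi φ t := by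
  set p := q / (q - 1)
  set w := L * s / t
  have ht : 0 < t := (mul_pos (one_pos.trans_le hL) hs).trans_le hLst
  have hw0 : 0 < w := by positivity
  have hw1 : w ≤ 1 := (div_le_one ht).mpr hLst
  have hp1 : 1 ≤ p := (one_le_div (by linarith)).mpr (by linarith)
  set c := w ^ (1 - p)
  have hc1 : 1 ≤ c := Real.one_le_rpow_of_pos_of_le_one_of_nonpos hw0 hw1 (by linarith)
  have hwc : w ^ p * c = w := by
    rw [← Real.rpow_add hw0, add_sub_cancel, Real.rpow_one]
  have hwcq : w ^ p * c ^ q = 1 := by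
    have hexp : p + (1 - p) * q = 0 := by
      have : q - 1 ≠ 0 := by linarith
      simp only [p]; field_simp; ring
    rw [← Real.rpow_mul hw0.le, ← Real.rpow_add hw0, hexp, Real.rpow_zero]
  refine iSup_le fun ⟨u, hu⟩ => ?_
  rcases le_or_gt (s * u - φ u) 0 with hneg | hpos
  · simp [ofReal_eq_zero.mpr hneg]
  have hu0 : 0 < u := hu.out.lt_of_ne (by rintro rfl; linarith [hφ 0 le_rfl])
  have hφv : w ^ p * φ (c * u) ≤ L * φ u := by
    calc w ^ p * φ (c * u) ≤ w ^ p * (L * c ^ q * φ u) :=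
          mul_le_mul_of_nonneg_left (hdec.le_mul_rpow hc1 hu0) (by positivity)
      _ = L * φ u := by linear_combination (L * φ u) * hwcq
  have htv : w ^ p * (t * (c * u)) = L * (s * u) := by
    calc w ^ p * (t * (c * u)) = (w ^ p * c) * t * u := by ring
      _ = L * (s * u) := by rw [hwc]; simp only [w]; field_simp
  calc ENNReal.ofReal (s * u - φ u)
      ≤ ENNReal.ofReal (w ^ p * (t * (c * u) - φ (c * u))) :=
        ofReal_le_ofReal (by nlinarith [mul_nonneg (sub_nonneg.mpr hL) hpos.le])
    _ = ENNReal.ofReal (w ^ p) * ENNReal.ofReal (t * (c * u) - φ (c * u)) :=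
        ofReal_mul (by positivity)
    _ ≤ ENNReal.ofReal (w ^ p) * conjPhi φ t :=
        mul_le_mul_right (ofReal_sub_le_conjPhi φ t (by positivity)) _

theorem conjPhi_le_rpow_mul (hφ : ∀ u, 0 ≤ u → 0 ≤ φ u) (hdec : AlmostDecPow φ q L)
    (hq : 1 < q) (hL : 1 ≤ L) (hs : 0 < s) (hst : s ≤ t) :
    conjPhi φ s ≤ ENNReal.ofReal ((L * s / t) ^ (q / (q - 1))) * conjPhi φ t := by
  rcases le_total (L * s) t with hLst | htLs
  · exact conjPhi_le_rpow_mul_of_mul_le hφ hdec hq hL hs hLst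
  have hw1 : 1 ≤ L * s / t := (one_le_div (hs.trans_le hst)).mpr htLs
  have hp : 0 ≤ q / (q - 1) := div_nonneg (by linarith) (by linarith)
  calc conjPhi φ s ≤ conjPhi φ t := conjPhi_mono φ hst
    _ ≤ ENNReal.ofReal ((L * s / t) ^ (q / (q - 1))) * conjPhi φ t :=
        le_mul_of_one_le_left' (one_le_ofReal.mpr (Real.one_le_rpow hw1 hp))

end Scaling

theorem ENNReal.div_ofReal_rpow_le_of_le_mul_s5 {a b : ℝ≥0∞} {L s t p : ℝ} (hL : 0 ≤ L)
    (hs : 0 < s) (ht : 0 < t) (hp : 0 < p) (h : a ≤ ENNReal.ofReal ((L * s / t) ^ p) * b) :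
    a / ENNReal.ofReal s ^ p ≤ ENNReal.ofReal (L ^ p) * (b / ENNReal.ofReal t ^ p) := by
  have hsp0 : ENNReal.ofReal s ^ p ≠ 0 := by simp [hs, hp]
  have hsp : ENNReal.ofReal s ^ p ≠ ⊤ := by simp [hp.le]
  rw [ENNReal.div_le_iff hsp0 hsp]
  rw [mul_div_assoc, Real.mul_rpow hL (by positivity), Real.div_rpow hs.le ht.le,
    ofReal_mul (by positivity), ofReal_div_of_pos (by positivity),
    ← ofReal_rpow_of_pos hs, ← ofReal_rpow_of_pos ht] at h
  calc a ≤ ENNReal.ofReal (L ^ p) * (ENNReal.ofReal s ^ p / ENNReal.ofReal t ^ p) * b := h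
    _ = ENNReal.ofReal (L ^ p) * (b / ENNReal.ofReal t ^ p) * ENNReal.ofReal s ^ p := by
      rw [div_eq_mul_inv, div_eq_mul_inv]; ring

/-- if φ satisfies (aDec)_q with constant L for q > 1, then φ* satisfies
(aInc)_{q/(q−1)} with a constant depending only on L and q. -/
theorem stmt5 (q L : ℝ) (hq : 1 < q) (hL : 1 ≤ L) :
    ∃ L' : ℝ, 1 ≤ L' ∧
      ∀ φ : ℝ → ℝ,
        (∀ t : ℝ, 0 ≤ t → 0 ≤ φ t) →
        (∀ s t : ℝ, 0 < s → s ≤ t → φ t / t ^ q ≤ L * (φ s / s ^ q)) →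
        ∀ s t : ℝ, 0 < s → s ≤ t →
          conjPhi φ s / ENNReal.ofReal s ^ (q / (q - 1)) ≤
            ENNReal.ofReal L' * (conjPhi φ t / ENNReal.ofReal t ^ (q / (q - 1))) := by
  have hp : 0 < q / (q - 1) := div_pos (by linarith) (by linarith)
  refine ⟨L ^ (q / (q - 1)), Real.one_le_rpow hL hp.le, fun φ hφ hdec s t hs hst => ?_⟩
  exact ENNReal.div_ofReal_rpow_le_of_le_mul_s5 (by linarith) hs (hs.trans_le hst) hp
    (conjPhi_le_rpow_mul hφ hdec hq hL hs hst)
end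

section
/- Let φ: [0,∞) → [0,∞) be a Φ-prefunction (non-decreasing, φ(0)=0, lim_{t→0+}φ(t)=0, lim_{t→∞}φ(t)=∞) satisfying (aDec)_1 with constant L, i.e. t ↦ φ(t)/t is almost decreasing. Then there exists a concave function ψ: [0,∞) → [0,∞) with ψ(0)=0 such that φ(t) ≈ ψ(t), i.e. there is a constant C depending only on L with (1/C)·ψ(t) ≤ φ(t) ≤ C·ψ(t) for all t ≥ 0. -/
/-!
Each `s > 0` gives the affine function `t ↦ φ s + (φ s / s) t`, and their infimum `ψ` is concave
and nonnegative, with `ψ 0 = inf φ = 0` since `φ → 0` at `0+`. Taking `s = t` gives `ψ t ≤ 2 φ t`.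
Conversely `φ t ≤ φ s` for `t ≤ s` by monotonicity, and `φ t ≤ L (φ s / s) t` for `s ≤ t` by the
almost decreasing property, so every affine function in the infimum is at least `φ t / L`.
-/

open Set Filter Topology

theorem ConcaveOn.ciInf {ι E : Type*} [Nonempty ι] [AddCommMonoid E] [Module ℝ E] {s : Set E}
    {f : ι → E → ℝ} (hf : ∀ i, ConcaveOn ℝ s (f i))
    (hbdd : ∀ x ∈ s, BddBelow (range fun i => f i x)) :
    ConcaveOn ℝ s fun x => ⨅ i, f i x := by
  refine ⟨(hf (Classical.arbitrary ι)).1, fun x hx y hy a b ha hb hab => le_ciInf fun i => ?_⟩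
  calc a • (⨅ j, f j x) + b • ⨅ j, f j y ≤ a • f i x + b • f i y := by
        gcongr
        exacts [ciInf_le (hbdd x hx) i, ciInf_le (hbdd y hy) i]
    _ ≤ f i (a • x + b • y) := (hf i).2 hx hy ha hb hab

instance : Nonempty (Ioi (0 : ℝ)) := nonempty_Ioi.to_subtype

noncomputable def affineEnvelope (φ : ℝ → ℝ) (t : ℝ) : ℝ :=
  ⨅ s : Ioi (0 : ℝ), φ s + φ s / s * t

section affineEnvelope

variable {φ : ℝ → ℝ} (hφ : ∀ s, 0 ≤ s → 0 ≤ φ s)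
include hφ

lemma affine_term_nonneg {s t : ℝ} (hs : 0 < s) (ht : 0 ≤ t) : 0 ≤ φ s + φ s / s * t := by
  have := hφ s hs.le
  positivity

lemma bddBelow_affine_terms {t : ℝ} (ht : 0 ≤ t) :
    BddBelow (range fun s : Ioi (0 : ℝ) => φ s + φ s / s * t) :=
  ⟨0, by rintro _ ⟨s, rfl⟩; exact affine_term_nonneg hφ s.2 ht⟩

lemma affineEnvelope_nonneg {t : ℝ} (ht : 0 ≤ t) : 0 ≤ affineEnvelope φ t :=
  le_ciInf fun s => affine_term_nonneg hφ s.2 ht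

lemma affineEnvelope_le {s t : ℝ} (hs : 0 < s) (ht : 0 ≤ t) :
    affineEnvelope φ t ≤ φ s + φ s / s * t :=
  ciInf_le (bddBelow_affine_terms hφ ht) ⟨s, hs⟩

lemma affineEnvelope_le_two_mul {t : ℝ} (ht : 0 < t) : affineEnvelope φ t ≤ 2 * φ t := by
  calc affineEnvelope φ t ≤ φ t + φ t / t * t := affineEnvelope_le hφ ht ht.le
    _ = 2 * φ t := by rw [div_mul_cancel₀ _ ht.ne']; ring

lemma concaveOn_affineEnvelope : ConcaveOn ℝ (Ici 0) (affineEnvelope φ) := by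
  refine ConcaveOn.ciInf (fun s => ?_) fun t ht => bddBelow_affine_terms hφ ht
  have hslope : 0 ≤ φ s / s := div_nonneg (hφ s s.2.le) s.2.le
  exact (concaveOn_const _ (convex_Ici 0)).add ((concaveOn_id (convex_Ici 0)).smul hslope)

lemma affineEnvelope_zero (hlim : Tendsto φ (𝓝[>] 0) (𝓝 0)) : affineEnvelope φ 0 = 0 := by
  refine le_antisymm (le_of_forall_pos_le_add fun ε hε => ?_) (affineEnvelope_nonneg hφ le_rfl)
  obtain ⟨s, hsε, hs⟩ := ((hlim.eventually (Iio_mem_nhds hε)).and self_mem_nhdsWithin).exists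
  calc affineEnvelope φ 0 ≤ φ s + φ s / s * 0 := affineEnvelope_le hφ hs le_rfl
    _ ≤ 0 + ε := by simpa using le_of_lt hsε

lemma le_mul_affineEnvelope {L : ℝ} (hL : 1 ≤ L)
    (hmono : ∀ s t : ℝ, 0 ≤ s → s ≤ t → φ s ≤ φ t)
    (hadec : ∀ s t : ℝ, 0 < s → s ≤ t → φ t / t ≤ L * (φ s / s)) {t : ℝ} (ht : 0 ≤ t) :
    φ t ≤ L * affineEnvelope φ t := by
  have hL₀ : 0 < L := by linarith
  rw [← div_le_iff₀' hL₀]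
  refine le_ciInf fun ⟨s, hs⟩ => ?_
  have hφs := hφ s hs.le
  have hslope : 0 ≤ φ s / s * t := mul_nonneg (div_nonneg hφs hs.le) ht
  rcases le_total t s with hts | hst
  · calc φ t / L ≤ φ t := div_le_self (hφ t ht) hL
      _ ≤ φ s := hmono t s ht hts
      _ ≤ φ s + φ s / s * t := le_add_of_nonneg_right hslope
  · have ht₀ : 0 < t := hs.trans_le hst
    calc φ t / L ≤ φ s / s * t := by
          rw [div_le_iff₀' hL₀, ← mul_assoc, ← div_le_iff₀ ht₀]
          exact hadec s t hs hst
      _ ≤ φ s + φ s / s * t := le_add_of_nonneg_left hφs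

end affineEnvelope

theorem stmt6_general (φ : ℝ → ℝ) (L : ℝ) (hL : 1 ≤ L)
    (hmono : ∀ s t : ℝ, 0 ≤ s → s ≤ t → φ s ≤ φ t)
    (h0 : φ 0 = 0)
    (hlim0 : Filter.Tendsto φ (nhdsWithin 0 (Set.Ioi 0)) (nhds 0))
    (hadec : ∀ s t : ℝ, 0 < s → s ≤ t → φ t / t ≤ L * (φ s / s)) :
    ∃ ψ : ℝ → ℝ, ConcaveOn ℝ (Set.Ici 0) ψ ∧ ψ 0 = 0 ∧ (∀ t : ℝ, 0 ≤ t → 0 ≤ ψ t) ∧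
      ∃ C : ℝ, 0 < C ∧ ∀ t : ℝ, 0 ≤ t → (1 / C) * ψ t ≤ φ t ∧ φ t ≤ C * ψ t := by
  have hφ : ∀ t, 0 ≤ t → 0 ≤ φ t := fun t ht => h0 ▸ hmono 0 t le_rfl ht
  have hψ0 : affineEnvelope φ 0 = 0 := affineEnvelope_zero hφ hlim0
  refine ⟨affineEnvelope φ, concaveOn_affineEnvelope hφ, hψ0,
    fun t ht => affineEnvelope_nonneg hφ ht, L + 2, by linarith, fun t ht => ⟨?_, ?_⟩⟩
  · have hψ_le : affineEnvelope φ t ≤ 2 * φ t := by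
      rcases ht.eq_or_lt with rfl | ht₀
      · simp [hψ0, h0]
      · exact affineEnvelope_le_two_mul hφ ht₀
    rw [one_div_mul_eq_div, div_le_iff₀ (by linarith)]
    nlinarith [hφ t ht]
  · calc φ t ≤ L * affineEnvelope φ t := le_mul_affineEnvelope hφ hL hmono hadec ht
      _ ≤ (L + 2) * affineEnvelope φ t := by nlinarith [affineEnvelope_nonneg hφ ht]

/-- a Φ-prefunction satisfying (aDec)_1 is equivalent to a concave
function vanishing at 0. -/
theorem stmt6 (φ : ℝ → ℝ) (L : ℝ) (hL : 1 ≤ L)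
    (hpos : ∀ t : ℝ, 0 ≤ t → 0 ≤ φ t)
    (hmono : ∀ s t : ℝ, 0 ≤ s → s ≤ t → φ s ≤ φ t)
    (h0 : φ 0 = 0)
    (hlim0 : Filter.Tendsto φ (nhdsWithin 0 (Set.Ioi 0)) (nhds 0))
    (hlimtop : Filter.Tendsto φ Filter.atTop Filter.atTop)
    (hadec : ∀ s t : ℝ, 0 < s → s ≤ t → φ t / t ≤ L * (φ s / s)) :
    ∃ ψ : ℝ → ℝ, ConcaveOn ℝ (Set.Ici 0) ψ ∧ ψ 0 = 0 ∧ (∀ t : ℝ, 0 ≤ t → 0 ≤ ψ t) ∧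
      ∃ C : ℝ, 0 < C ∧ ∀ t : ℝ, 0 ≤ t → (1 / C) * ψ t ≤ φ t ∧ φ t ≤ C * ψ t :=
  stmt6_general φ L hL hmono h0 hlim0 hadec
end

section
/- Let φ: [0,∞) → [0,∞) satisfy (aInc)_p and (aDec)_q with constant L, for 1 < p ≤ q. Then for any s, t ≥ 0 and κ ∈ (0,1), there is a constant C depending only on L, p, q such that t·s ≤ C·(κ·φ(t) + κ^{−1/(p−1)}·φ*(s)), where φ* is the conjugate function. -/
/-- `(aInc)_p` with constant `L`. -/
def AlmostIncreasingRpow (φ : ℝ → ℝ) (p L : ℝ) : Prop :=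
  ∀ s t : ℝ, 0 < s → s ≤ t → φ s / s ^ p ≤ L * (φ t / t ^ p)

theorem ofReal_mul_le_add_conjPhi (φ : ℝ → ℝ) (s : ℝ) {u : ℝ} (hu : 0 ≤ u) :
    ENNReal.ofReal (s * u) ≤ ENNReal.ofReal (φ u) + conjPhi φ s :=
  calc ENNReal.ofReal (s * u) = ENNReal.ofReal (φ u + (s * u - φ u)) := by rw [add_sub_cancel]
    _ ≤ ENNReal.ofReal (φ u) + ENNReal.ofReal (s * u - φ u) := ENNReal.ofReal_add_le
    _ ≤ ENNReal.ofReal (φ u) + conjPhi φ s := by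
      gcongr
      exact le_iSup (fun v : Set.Ici (0 : ℝ) => ENNReal.ofReal (s * v - φ v)) ⟨u, hu⟩

theorem ofReal_mul_le_inv_mul_add_conjPhi (φ : ℝ → ℝ) (s : ℝ) {t lam : ℝ} (ht : 0 ≤ t)
    (hlam : 0 < lam) :
    ENNReal.ofReal (t * s) ≤
      ENNReal.ofReal (lam⁻¹ * φ (lam * t)) + ENNReal.ofReal lam⁻¹ * conjPhi φ s := by
  have hinv : 0 ≤ lam⁻¹ := inv_nonneg.2 hlam.le
  calc ENNReal.ofReal (t * s) = ENNReal.ofReal lam⁻¹ * ENNReal.ofReal (s * (lam * t)) := by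
        rw [← ENNReal.ofReal_mul hinv]
        field_simp
    _ ≤ ENNReal.ofReal lam⁻¹ * (ENNReal.ofReal (φ (lam * t)) + conjPhi φ s) :=
        mul_le_mul_right (ofReal_mul_le_add_conjPhi φ s (by positivity)) _
    _ = ENNReal.ofReal (lam⁻¹ * φ (lam * t)) + ENNReal.ofReal lam⁻¹ * conjPhi φ s := by
        rw [mul_add, ENNReal.ofReal_mul hinv]

theorem AlmostIncreasingRpow.apply_mul_le {φ : ℝ → ℝ} {p L : ℝ} (hφ : AlmostIncreasingRpow φ p L)
    {lam t : ℝ} (hlam : 0 < lam) (hlam1 : lam ≤ 1) (ht : 0 < t) :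
    φ (lam * t) ≤ L * lam ^ p * φ t := by
  have h := hφ (lam * t) t (by positivity) (mul_le_of_le_one_left ht.le hlam1)
  rw [Real.mul_rpow hlam.le ht.le, div_le_iff₀ (by positivity)] at h
  calc φ (lam * t) ≤ L * (φ t / t ^ p) * (lam ^ p * t ^ p) := h
    _ = L * lam ^ p * φ t := by field_simp

theorem AlmostIncreasingRpow.ofReal_mul_le {φ : ℝ → ℝ} {p L : ℝ} (hφ : AlmostIncreasingRpow φ p L)
    (hp : 1 < p) {s t κ : ℝ} (ht : 0 < t) (hκ : 0 < κ) (hκ1 : κ < 1) :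
    ENNReal.ofReal (t * s) ≤
      ENNReal.ofReal (L * κ * φ t) + ENNReal.ofReal (κ ^ (-(1 : ℝ) / (p - 1))) * conjPhi φ s := by
  have hp1 : p - 1 ≠ 0 := by linarith
  set lam := κ ^ ((1 : ℝ) / (p - 1))
  have hlam : 0 < lam := Real.rpow_pos_of_pos hκ _
  have hlam1 : lam ≤ 1 := Real.rpow_le_one hκ.le hκ1.le (one_div_nonneg.2 (by linarith))
  have hlam_pow : lam ^ (p - 1) = κ := by
    rw [← Real.rpow_mul hκ.le, one_div_mul_cancel hp1, Real.rpow_one]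
  have hlam_inv : κ ^ (-(1 : ℝ) / (p - 1)) = lam⁻¹ := by
    rw [neg_div, Real.rpow_neg hκ.le]
  have hscale : lam⁻¹ * φ (lam * t) ≤ L * κ * φ t := by
    rw [inv_mul_le_iff₀ hlam, ← hlam_pow, Real.rpow_sub_one hlam.ne']
    calc φ (lam * t) ≤ L * lam ^ p * φ t := hφ.apply_mul_le hlam hlam1 ht
      _ = lam * (L * (lam ^ p / lam) * φ t) := by field_simp
  calc ENNReal.ofReal (t * s)
      ≤ ENNReal.ofReal (lam⁻¹ * φ (lam * t)) + ENNReal.ofReal lam⁻¹ * conjPhi φ s :=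
        ofReal_mul_le_inv_mul_add_conjPhi φ s ht.le hlam
    _ ≤ _ := by
        rw [hlam_inv]
        gcongr

theorem stmt8_general (p q L : ℝ) (hp : 1 < p) (hL : 1 ≤ L) :
    ∃ C : ℝ, 0 < C ∧
      ∀ φ : ℝ → ℝ,
        (∀ t : ℝ, 0 ≤ t → 0 ≤ φ t) →
        (∀ s t : ℝ, 0 < s → s ≤ t → φ s / s ^ p ≤ L * (φ t / t ^ p)) →
        (∀ s t : ℝ, 0 < s → s ≤ t → φ t / t ^ q ≤ L * (φ s / s ^ q)) →
        ∀ s t κ : ℝ, 0 ≤ s → 0 ≤ t → 0 < κ → κ < 1 →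
          ENNReal.ofReal (t * s) ≤
            ENNReal.ofReal (C * κ * φ t) +
              ENNReal.ofReal (C * κ ^ (-(1 : ℝ) / (p - 1))) * conjPhi φ s := by
  refine ⟨L, by linarith, fun φ _ hinc _ s t κ _ ht hκ hκ1 => ?_⟩
  rcases ht.eq_or_lt with rfl | ht
  · simp
  calc ENNReal.ofReal (t * s)
      ≤ ENNReal.ofReal (L * κ * φ t) +
          ENNReal.ofReal (κ ^ (-(1 : ℝ) / (p - 1))) * conjPhi φ s :=
        AlmostIncreasingRpow.ofReal_mul_le hinc hp ht hκ hκ1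
    _ ≤ _ := by
        gcongr
        exact le_mul_of_one_le_left (by positivity) hL

/-- if φ satisfies (aInc)_p and (aDec)_q with constant L, 1 < p ≤ q,
then t·s ≤ C·(κ·φ(t) + κ^{−1/(p−1)}·φ*(s)) for all s, t ≥ 0 and κ ∈ (0,1). -/
theorem stmt8 (p q L : ℝ) (hp : 1 < p) (hpq : p ≤ q) (hL : 1 ≤ L) :
    ∃ C : ℝ, 0 < C ∧
      ∀ φ : ℝ → ℝ,
        (∀ t : ℝ, 0 ≤ t → 0 ≤ φ t) →
        (∀ s t : ℝ, 0 < s → s ≤ t → φ s / s ^ p ≤ L * (φ t / t ^ p)) →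
        (∀ s t : ℝ, 0 < s → s ≤ t → φ t / t ^ q ≤ L * (φ s / s ^ q)) →
        ∀ s t κ : ℝ, 0 ≤ s → 0 ≤ t → 0 < κ → κ < 1 →
          ENNReal.ofReal (t * s) ≤
            ENNReal.ofReal (C * κ * φ t) +
              ENNReal.ofReal (C * κ ^ (-(1 : ℝ) / (p - 1))) * conjPhi φ s :=
  stmt8_general p q L hp hL
end

section
/- Let φ: [0,∞) → [0,∞) be convex and C¹ with φ(0)=0 and φ' satisfying (Inc)_{p-1} and (Dec)_{q-1} for 1 < p ≤ q. Define the vector field A(x) := φ'(|x|)·x/|x| for x ∈ ℝⁿ \ {0}, A(0) := 0. Then there is a constant c > 0 depending only on p, q such that for all x, y ∈ ℝⁿ (not both zero): (A(x) − A(y))·(x − y) ≥ c · (φ'(|x|+|y|)/(|x|+|y|)) · |x − y|². -/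
/-!
Put `a = ‖x‖`, `b = ‖y‖` and `t = ⟪x, y⟫`. Both sides of the inequality are affine in `t`, and
Cauchy–Schwarz confines `t` to `[-a b, a b]`, so it suffices to check the two collinear
configurations `t = ± a b`; these are scalar inequalities for `φ'`. For `b ≤ a`, `(Dec)_{q-1}`
gives `φ'(a + b) ≤ 2^{q-1} φ'(a)`, which bounds the weight `φ'(a + b)/(a + b)` by a multiple of
`φ'(a)/a`, while `(Inc)_{p-1}` gives `φ'(b) ≤ (b/a)^{p-1} φ'(a) ≤ (1 - min(1, p-1)(1 - b/a)) φ'(a)`,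
a gain of order `φ'(a)(a - b)/a` in `φ'(a) - φ'(b)`. Convexity makes `φ'` nondecreasing, which
together with `(Dec)_{q-1}` forces `φ' ≥ 0`.
-/

open Real Set
open scoped InnerProductSpace

theorem Real.rpow_le_one_sub_min_mul {r e : ℝ} (hr0 : 0 < r) (hr1 : r ≤ 1) (he : 0 < e) :
    r ^ e ≤ 1 - min 1 e * (1 - r) := by
  have hm : 0 < min 1 e := lt_min one_pos he
  calc r ^ e ≤ r ^ min 1 e := rpow_le_rpow_of_exponent_ge hr0 hr1 (min_le_right _ _)
    _ = (1 + (r - 1)) ^ min 1 e := by ring_nf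
    _ ≤ 1 + min 1 e * (r - 1) :=
      rpow_one_add_le_one_add_mul_self (by linarith) hm.le (min_le_left _ _)
    _ = 1 - min 1 e * (1 - r) := by ring

theorem ConvexOn.monotoneOn_of_hasDerivAt {S : Set ℝ} {f f' : ℝ → ℝ} (hfc : ConvexOn ℝ S f)
    (hf : ∀ x ∈ S, HasDerivAt f (f' x) x) : MonotoneOn f' S := by
  intro x hx y hy hxy
  rcases hxy.eq_or_lt with rfl | hxy
  · rfl
  exact (hfc.le_slope_of_hasDerivAt hx hy hxy (hf x hx)).trans
    (hfc.slope_le_of_hasDerivAt hx hy hxy (hf y hy))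

section GrowthConditions

variable {g : ℝ → ℝ} {p q : ℝ}

theorem le_rpow_div_mul_of_inc
    (hinc : ∀ s t : ℝ, 0 < s → s ≤ t → g s / s ^ (p - 1) ≤ g t / t ^ (p - 1))
    {s t : ℝ} (hs : 0 < s) (hst : s ≤ t) : g s ≤ (s / t) ^ (p - 1) * g t := by
  have h := hinc s t hs hst
  rw [div_le_iff₀ (rpow_pos_of_pos hs _)] at h
  rwa [div_rpow hs.le (hs.trans_le hst).le, div_mul_comm]

theorem le_rpow_div_mul_of_dec
    (hdec : ∀ s t : ℝ, 0 < s → s ≤ t → g t / t ^ (q - 1) ≤ g s / s ^ (q - 1))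
    {s t : ℝ} (hs : 0 < s) (hst : s ≤ t) : g t ≤ (t / s) ^ (q - 1) * g s := by
  have ht : 0 < t := hs.trans_le hst
  have h := hdec s t hs hst
  rw [div_le_iff₀ (rpow_pos_of_pos ht _)] at h
  rwa [div_rpow ht.le hs.le, div_mul_comm]

theorem nonneg_of_monotoneOn_of_dec (hq : 1 < q) (hmono : MonotoneOn g (Ioi 0))
    (hdec : ∀ s t : ℝ, 0 < s → s ≤ t → g t / t ^ (q - 1) ≤ g s / s ^ (q - 1))
    {t : ℝ} (ht : 0 < t) : 0 ≤ g t := by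
  by_contra! hneg
  have htwo : (1 : ℝ) < 2 ^ (q - 1) := one_lt_rpow one_lt_two (by linarith)
  have hup := le_rpow_div_mul_of_dec hdec ht (by linarith : t ≤ 2 * t)
  rw [mul_div_cancel_right₀ 2 ht.ne'] at hup
  have hle : g t ≤ g (2 * t) :=
    hmono ht (show (0 : ℝ) < 2 * t by positivity) (by linarith)
  nlinarith

theorem le_two_rpow_mul_of_dec (hq : 1 ≤ q) (hnonneg : ∀ t : ℝ, 0 < t → 0 ≤ g t)
    (hdec : ∀ s t : ℝ, 0 < s → s ≤ t → g t / t ^ (q - 1) ≤ g s / s ^ (q - 1))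
    {a b : ℝ} (hb : 0 < b) (hba : b ≤ a) : g (a + b) ≤ 2 ^ (q - 1) * g a := by
  have ha : 0 < a := hb.trans_le hba
  calc g (a + b) ≤ ((a + b) / a) ^ (q - 1) * g a := le_rpow_div_mul_of_dec hdec ha (by linarith)
    _ ≤ 2 ^ (q - 1) * g a := by
      refine mul_le_mul_of_nonneg_right (rpow_le_rpow (by positivity) ?_ (by linarith))
        (hnonneg a ha)
      rw [div_le_iff₀ ha]
      linarith

noncomputable def monotonicityConst (p q : ℝ) : ℝ := min 1 (p - 1) / 2 ^ (q - 1)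

theorem monotonicityConst_pos (hp : 1 < p) : 0 < monotonicityConst p q :=
  div_pos (lt_min one_pos (by linarith)) (rpow_pos_of_pos two_pos _)

theorem monotonicityConst_mul_two_rpow : monotonicityConst p q * 2 ^ (q - 1) = min 1 (p - 1) :=
  div_mul_cancel₀ _ (rpow_pos_of_pos two_pos _).ne'

theorem monotonicityConst_le_one (hq : 1 ≤ q) : monotonicityConst p q ≤ 1 := by
  rw [monotonicityConst, div_le_one (rpow_pos_of_pos two_pos _)]
  exact (min_le_left _ _).trans (one_le_rpow one_le_two (by linarith))

theorem monotonicityConst_mul_sq_add_le (hp : 1 < p) (hq : 1 ≤ q)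
    (hnonneg : ∀ t : ℝ, 0 < t → 0 ≤ g t)
    (hdec : ∀ s t : ℝ, 0 < s → s ≤ t → g t / t ^ (q - 1) ≤ g s / s ^ (q - 1))
    {a b : ℝ} (ha : 0 < a) (hb : 0 < b) :
    monotonicityConst p q * (g (a + b) / (a + b)) * (a + b) ^ 2 ≤ (g a + g b) * (a + b) := by
  suffices h : monotonicityConst p q * g (a + b) ≤ g a + g b by
    have hab : 0 < a + b := by positivity
    calc _ = monotonicityConst p q * g (a + b) * (a + b) := by field_simp
      _ ≤ (g a + g b) * (a + b) := mul_le_mul_of_nonneg_right h hab.le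
  wlog hba : b ≤ a generalizing a b
  · rw [add_comm a b, add_comm (g a)]
    exact this hb ha (le_of_not_ge hba)
  calc monotonicityConst p q * g (a + b)
      ≤ monotonicityConst p q * (2 ^ (q - 1) * g a) :=
        mul_le_mul_of_nonneg_left (le_two_rpow_mul_of_dec hq hnonneg hdec hb hba)
          (monotonicityConst_pos hp).le
    _ = min 1 (p - 1) * g a := by rw [← mul_assoc, monotonicityConst_mul_two_rpow]
    _ ≤ g a := mul_le_of_le_one_left (hnonneg a ha) (min_le_left _ _)
    _ ≤ g a + g b := le_add_of_nonneg_right (hnonneg b hb)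

theorem monotonicityConst_mul_sq_sub_le (hp : 1 < p) (hq : 1 ≤ q)
    (hnonneg : ∀ t : ℝ, 0 < t → 0 ≤ g t)
    (hinc : ∀ s t : ℝ, 0 < s → s ≤ t → g s / s ^ (p - 1) ≤ g t / t ^ (p - 1))
    (hdec : ∀ s t : ℝ, 0 < s → s ≤ t → g t / t ^ (q - 1) ≤ g s / s ^ (q - 1))
    {a b : ℝ} (ha : 0 < a) (hb : 0 < b) :
    monotonicityConst p q * (g (a + b) / (a + b)) * (a - b) ^ 2 ≤ (g a - g b) * (a - b) := by
  wlog hba : b ≤ a generalizing a b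
  · convert this hb ha (le_of_not_ge hba) using 1 <;> ring_nf
  set m := min 1 (p - 1)
  have hgain : m * (g a / a) * (a - b) ≤ g a - g b := by
    have hdiff : g b ≤ g a - m * (g a / a) * (a - b) :=
      calc g b ≤ (b / a) ^ (p - 1) * g a := le_rpow_div_mul_of_inc hinc hb hba
        _ ≤ (1 - m * (1 - b / a)) * g a :=
          mul_le_mul_of_nonneg_right
            (rpow_le_one_sub_min_mul (div_pos hb ha) ((div_le_one ha).2 hba) (by linarith))
            (hnonneg a ha)
        _ = g a - m * (g a / a) * (a - b) := by field_simp
    linarith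
  have hweight : monotonicityConst p q * (g (a + b) / (a + b)) ≤ m * (g a / a) := by
    calc monotonicityConst p q * (g (a + b) / (a + b))
        ≤ monotonicityConst p q * (2 ^ (q - 1) * g a / a) :=
          mul_le_mul_of_nonneg_left
            (div_le_div₀ (mul_nonneg (rpow_pos_of_pos two_pos _).le (hnonneg a ha))
              (le_two_rpow_mul_of_dec hq hnonneg hdec hb hba) ha (by linarith))
            (monotonicityConst_pos hp).le
      _ = m * (g a / a) := by rw [mul_div_assoc, ← mul_assoc, monotonicityConst_mul_two_rpow]
  calc monotonicityConst p q * (g (a + b) / (a + b)) * (a - b) ^ 2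
      ≤ m * (g a / a) * (a - b) ^ 2 := mul_le_mul_of_nonneg_right hweight (sq_nonneg _)
    _ = m * (g a / a) * (a - b) * (a - b) := by ring
    _ ≤ (g a - g b) * (a - b) := mul_le_mul_of_nonneg_right hgain (by linarith)

end GrowthConditions

section RadialField

variable {E : Type*} [NormedAddCommGroup E] [InnerProductSpace ℝ E]

theorem mul_norm_sub_sq_le_inner_of_collinear {x y : E} (hx : x ≠ 0) (hy : y ≠ 0) {K α β : ℝ}
    (hanti : K * (‖x‖ + ‖y‖) ^ 2 ≤ (α + β) * (‖x‖ + ‖y‖))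
    (hpar : K * (‖x‖ - ‖y‖) ^ 2 ≤ (α - β) * (‖x‖ - ‖y‖)) :
    K * ‖x - y‖ ^ 2 ≤ ⟪(α / ‖x‖) • x - (β / ‖y‖) • y, x - y⟫_ℝ := by
  have ha : 0 < ‖x‖ := norm_pos_iff.2 hx
  have hb : 0 < ‖y‖ := norm_pos_iff.2 hy
  obtain ⟨hlo, hhi⟩ := abs_le.1 (abs_real_inner_le_norm x y)
  have hinner : ⟪(α / ‖x‖) • x - (β / ‖y‖) • y, x - y⟫_ℝ =
      α * ‖x‖ + β * ‖y‖ - (α / ‖x‖ + β / ‖y‖) * ⟪x, y⟫_ℝ := by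
    rw [inner_sub_left, real_inner_smul_left, real_inner_smul_left, inner_sub_right,
      inner_sub_right, real_inner_self_eq_norm_sq, real_inner_self_eq_norm_sq,
      real_inner_comm y x]
    field_simp
    ring
  rw [norm_sub_sq_real, hinner]
  set a := ‖x‖
  set b := ‖y‖
  set t := ⟪x, y⟫_ℝ
  -- both sides are affine in `t`: interpolate between `t = -a b` and `t = a b`
  have hdefect : 2 * (a * b) * (α * a + β * b - (α / a + β / b) * t - K * (a ^ 2 - 2 * t + b ^ 2)) =
      (a * b - t) * ((α + β) * (a + b) - K * (a + b) ^ 2) +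
      (a * b + t) * ((α - β) * (a - b) - K * (a - b) ^ 2) := by
    field_simp
    ring
  refine sub_nonneg.1 (nonneg_of_mul_nonneg_right ?_ (by positivity : 0 < 2 * (a * b)))
  rw [hdefect]
  exact add_nonneg (mul_nonneg (by linarith) (by linarith)) (mul_nonneg (by linarith) (by linarith))

variable {g : ℝ → ℝ} {p q : ℝ}

theorem monotonicityConst_mul_le_inner (hp : 1 < p) (hq : 1 ≤ q)
    (hnonneg : ∀ t : ℝ, 0 < t → 0 ≤ g t)
    (hinc : ∀ s t : ℝ, 0 < s → s ≤ t → g s / s ^ (p - 1) ≤ g t / t ^ (p - 1))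
    (hdec : ∀ s t : ℝ, 0 < s → s ≤ t → g t / t ^ (q - 1) ≤ g s / s ^ (q - 1))
    {x y : E} (hxy : x ≠ 0 ∨ y ≠ 0) :
    monotonicityConst p q * (g (‖x‖ + ‖y‖) / (‖x‖ + ‖y‖)) * ‖x - y‖ ^ 2 ≤
      ⟪(g ‖x‖ / ‖x‖) • x - (g ‖y‖ / ‖y‖) • y, x - y⟫_ℝ := by
  wlog hx : x ≠ 0 generalizing x y
  · have := this hxy.symm (hxy.resolve_left hx)
    rwa [add_comm ‖y‖, norm_sub_rev y x, ← inner_neg_neg, neg_sub, neg_sub] at this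
  have ha : 0 < ‖x‖ := norm_pos_iff.2 hx
  rcases eq_or_ne y 0 with rfl | hy
  · simp only [norm_zero, add_zero, smul_zero, sub_zero, real_inner_smul_left,
      real_inner_self_eq_norm_sq]
    rw [mul_assoc]
    exact mul_le_of_le_one_left (by have := hnonneg _ ha; positivity)
      (monotonicityConst_le_one hq)
  have hb : 0 < ‖y‖ := norm_pos_iff.2 hy
  exact mul_norm_sub_sq_le_inner_of_collinear hx hy
    (monotonicityConst_mul_sq_add_le hp hq hnonneg hdec ha hb)
    (monotonicityConst_mul_sq_sub_le hp hq hnonneg hinc hdec ha hb)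

end RadialField

theorem stmt10_general (n : ℕ) (φ φ' : ℝ → ℝ) (p q : ℝ) (hp : 1 < p) (hpq : p ≤ q)
    (hconv : ConvexOn ℝ (Set.Ici 0) φ)
    (hderiv : ∀ t : ℝ, 0 < t → HasDerivAt φ (φ' t) t)
    (hinc : ∀ s t : ℝ, 0 < s → s ≤ t → φ' s / s ^ (p - 1) ≤ φ' t / t ^ (p - 1))
    (hdec : ∀ s t : ℝ, 0 < s → s ≤ t → φ' t / t ^ (q - 1) ≤ φ' s / s ^ (q - 1)) :
    ∃ c : ℝ, 0 < c ∧
      ∀ x y : EuclideanSpace ℝ (Fin n), (x ≠ 0 ∨ y ≠ 0) →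
        c * (φ' (‖x‖ + ‖y‖) / (‖x‖ + ‖y‖)) * ‖x - y‖ ^ 2 ≤
          (inner ℝ ((φ' ‖x‖ / ‖x‖) • x - (φ' ‖y‖ / ‖y‖) • y) (x - y) : ℝ) := by
  have hq : 1 < q := hp.trans_le hpq
  have hmono : MonotoneOn φ' (Ioi 0) :=
    (hconv.subset Ioi_subset_Ici_self (convex_Ioi 0)).monotoneOn_of_hasDerivAt hderiv
  have hnonneg : ∀ t : ℝ, 0 < t → 0 ≤ φ' t := fun t ht =>
    nonneg_of_monotoneOn_of_dec hq hmono hdec ht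
  exact ⟨monotonicityConst p q, monotonicityConst_pos hp, fun x y hxy =>
    monotonicityConst_mul_le_inner hp hq.le hnonneg hinc hdec hxy⟩

/-- strong monotonicity of the φ-Laplacian vector field
A(x) = φ'(|x|)·x/|x|. -/
theorem stmt10 (n : ℕ) (φ φ' : ℝ → ℝ) (p q : ℝ) (hp : 1 < p) (hpq : p ≤ q)
    (hconv : ConvexOn ℝ (Set.Ici 0) φ)
    (h0 : φ 0 = 0)
    (hderiv : ∀ t : ℝ, 0 < t → HasDerivAt φ (φ' t) t)
    (hderivCont : ContinuousOn φ' (Set.Ici 0))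
    (hinc : ∀ s t : ℝ, 0 < s → s ≤ t → φ' s / s ^ (p - 1) ≤ φ' t / t ^ (p - 1))
    (hdec : ∀ s t : ℝ, 0 < s → s ≤ t → φ' t / t ^ (q - 1) ≤ φ' s / s ^ (q - 1)) :
    ∃ c : ℝ, 0 < c ∧
      ∀ x y : EuclideanSpace ℝ (Fin n), (x ≠ 0 ∨ y ≠ 0) →
        c * (φ' (‖x‖ + ‖y‖) / (‖x‖ + ‖y‖)) * ‖x - y‖ ^ 2 ≤
          (inner ℝ ((φ' ‖x‖ / ‖x‖) • x - (φ' ‖y‖ / ‖y‖) • y) (x - y) : ℝ) :=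
  stmt10_general n φ φ' p q hp hpq hconv hderiv hinc hdec
end
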